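/- Let X and Y be real normed spaces and f: X → Y a phase-isometry. Let x* ∈ X* be a w*-exposed point of the dual unit ball, i.e., x* is the unique norm-one supporting functional at some smooth point u ∈ X with ‖u‖ = 1. Then there exists φ ∈ Y* with ‖φ‖ = 1 such that for every x ∈ X, x*(x) = φ(f(x)) or x*(x) = −φ(f(x)). -/

import Mathlib

/-!
Push the smooth point `u` to infinity along the ray `n • u`. Smoothness of `u` means that
`‖n • u + y‖ - n → x' y`, since any weak-* cluster point of functionals norming `n • u + y` is a
norm-one functional supporting `u`. Let `G n` be norm-one functionals norming `f (n • u)` and let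
`φ` be a weak-* cluster point of them. The phase-isometry identity
`‖f x + f y‖ + ‖f x - f y‖ = ‖x + y‖ + ‖x - y‖` squeezes `G n (f x)` to within `o(1)` of
`‖n • u + x‖ - n` or of `‖n • u - x‖ - n`, i.e. of `x' x` or `-x' x`; hence `|φ (f x)| = |x' x|`.
-/

open Filter Topology Set

theorem Filter.Tendsto.of_forall_eq_or_eq {α β : Type*} {la : Filter α} {lb : Filter β}
    {a b w : α → β} (ha : Tendsto a la lb) (hb : Tendsto b la lb)
    (h : ∀ i, w i = a i ∨ w i = b i) : Tendsto w la lb := by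
  intro s hs
  refine mem_map.2 ?_
  filter_upwards [mem_map.1 (ha hs), mem_map.1 (hb hs)] with i has hbs
  rcases h i with h | h <;> simp_all

theorem MapClusterPt.eq_of_tendsto {α β : Type*} [TopologicalSpace β] [T2Space β] {l : Filter α}
    {v : α → β} {c d : β} (hc : MapClusterPt c l v) (hv : Tendsto v l (𝓝 d)) : c = d :=
  eq_of_nhds_neBot (hc.neBot.mono (inf_le_inf_left _ hv))

theorem ContinuousLinearMap.apply_le_norm_of_norm_le_one {E : Type*} [SeminormedAddCommGroup E]
    [NormedSpace ℝ E] {g : StrongDual ℝ E} (hg : ‖g‖ ≤ 1) (z : E) : g z ≤ ‖z‖ :=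
  (Real.le_norm_self _).trans (by simpa using g.le_of_opNorm_le hg z)

theorem StrongDual.exists_mapClusterPt_apply {𝕜 E ι : Type*} [NontriviallyNormedField 𝕜]
    [ProperSpace 𝕜] [SeminormedAddCommGroup E] [NormedSpace 𝕜 E] {l : Filter ι} [l.NeBot]
    {G : ι → StrongDual 𝕜 E} {r : ℝ} (hG : ∀ i, ‖G i‖ ≤ r) :
    ∃ φ : StrongDual 𝕜 E, ‖φ‖ ≤ r ∧ ∀ y, MapClusterPt (φ y) l (fun i ↦ G i y) := by
  obtain ⟨φ, hφ, hclus⟩ :=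
    (WeakDual.isCompact_closedBall (0 : StrongDual 𝕜 E) r).exists_mapClusterPt (f := l)
      (u := fun i ↦ StrongDual.toWeakDual (G i))
      (tendsto_principal.2 (Eventually.of_forall fun i ↦ by simpa using hG i))
  exact ⟨WeakDual.toStrongDual φ, by simpa using hφ,
    fun y ↦ hclus.continuousAt_comp (WeakDual.eval_continuous y).continuousAt⟩

section SmoothPoint

variable {X : Type*} [SeminormedAddCommGroup X] [NormedSpace ℝ X] {u : X} {x' : StrongDual ℝ X}

theorem antitone_norm_smul_add_sub (hu : ‖u‖ ≤ 1) (y : X) :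
    Antitone fun t : ℝ ↦ ‖t • u + y‖ - t := by
  intro s t hst
  have : ‖t • u + y‖ ≤ ‖s • u + y‖ + (t - s) :=
    calc ‖t • u + y‖ = ‖(s • u + y) + (t - s) • u‖ := by rw [sub_smul]; abel_nf
      _ ≤ ‖s • u + y‖ + ‖(t - s) • u‖ := norm_add_le _ _
      _ ≤ ‖s • u + y‖ + (t - s) := by
        rw [norm_smul, Real.norm_of_nonneg (sub_nonneg.2 hst)]
        gcongr
        exact mul_le_of_le_one_right (sub_nonneg.2 hst) hu
  linarith

theorem le_norm_smul_add_sub (hx' : ‖x'‖ ≤ 1) (hx'u : x' u = 1) (t : ℝ) (y : X) :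
    x' y ≤ ‖t • u + y‖ - t := by
  have := x'.apply_le_norm_of_norm_le_one hx' (t • u + y)
  simp only [map_add, map_smul, hx'u, smul_eq_mul, mul_one] at this
  linarith

theorem tendsto_norm_smul_add_sub_of_unique (hu : ‖u‖ = 1) (hx' : ‖x'‖ = 1) (hx'u : x' u = 1)
    (huniq : ∀ ψ : StrongDual ℝ X, ‖ψ‖ = 1 → ψ u = 1 → ψ = x') (y : X) :
    Tendsto (fun n : ℕ ↦ ‖(n : ℝ) • u + y‖ - n) atTop (𝓝 (x' y)) := by
  set a : ℕ → ℝ := fun n ↦ ‖(n : ℝ) • u + y‖ - n with ha_def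
  have ha_ge : ∀ n, x' y ≤ a n := fun n ↦ le_norm_smul_add_sub hx'.le hx'u _ _
  have ha_lim : Tendsto a atTop (𝓝 (⨅ n, a n)) :=
    tendsto_atTop_ciInf ((antitone_norm_smul_add_sub hu.le y).comp_monotone Nat.mono_cast)
      ⟨x' y, forall_mem_range.2 ha_ge⟩
  choose g hg_norm hg_apply using fun n : ℕ ↦ exists_dual_vector'' ℝ ((n : ℝ) • u + y)
  have hg_expand : ∀ n : ℕ, n * (1 - g n u) = g n y - a n := fun n ↦ by
    have := hg_apply n
    simp only [map_add, map_smul, smul_eq_mul, RCLike.ofReal_real_eq_id, id] at this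
    simp only [ha_def]
    linarith
  have hgu_le : ∀ n, g n u ≤ 1 := fun n ↦ by
    simpa [hu] using (g n).apply_le_norm_of_norm_le_one (hg_norm n) u
  have hgu : Tendsto (fun n ↦ g n u) atTop (𝓝 1) := by
    refine tendsto_of_tendsto_of_tendsto_of_le_of_le' (by simpa using
      (tendsto_const_div_atTop_nhds_zero_nat (‖y‖ - x' y)).const_sub 1) tendsto_const_nhds ?_
      (Eventually.of_forall hgu_le)
    filter_upwards [eventually_gt_atTop 0] with n hn
    have hn' : (0 : ℝ) < n := Nat.cast_pos.2 hn
    rw [sub_le_comm, le_div_iff₀' hn', hg_expand]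
    linarith [(g n).apply_le_norm_of_norm_le_one (hg_norm n) y, ha_ge n]
  obtain ⟨ψ, hψ_norm, hψ⟩ := StrongDual.exists_mapClusterPt_apply (l := atTop) hg_norm
  have hψu : ψ u = 1 := (hψ u).eq_of_tendsto hgu
  have hψ_eq : ψ = x' :=
    huniq ψ (le_antisymm hψ_norm (by simpa [hψu, hu] using ψ.le_opNorm u)) hψu
  have ha_le_g : ∀ n, a n ≤ g n y := fun n ↦ by
    have := hg_expand n
    nlinarith [hgu_le n, (Nat.cast_nonneg n : (0 : ℝ) ≤ n)]
  have hinf_le : ⨅ n, a n ≤ x' y := hψ_eq ▸ isClosed_Ici.mem_of_mapClusterPt (hψ y)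
    (Eventually.of_forall fun n ↦ (ciInf_le ⟨x' y, forall_mem_range.2 ha_ge⟩ n).trans (ha_le_g n))
  rwa [le_antisymm hinf_le (le_ciInf ha_ge)] at ha_lim

end SmoothPoint

section PhaseIsometry

variable {X Y : Type*} [SeminormedAddCommGroup X] [SeminormedAddCommGroup Y]

def IsPhaseIsometry (f : X → Y) : Prop :=
  ∀ x y : X, ({‖f x + f y‖, ‖f x - f y‖} : Set ℝ) = {‖x + y‖, ‖x - y‖}

namespace IsPhaseIsometry

variable {f : X → Y}

theorem norm_add_eq_or (hf : IsPhaseIsometry f) (x y : X) :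
    ‖f x + f y‖ = ‖x + y‖ ∨ ‖f x + f y‖ = ‖x - y‖ := by
  rcases Set.pair_eq_pair_iff.1 (hf x y) with ⟨h, -⟩ | ⟨h, -⟩ <;> simp [h]

theorem norm_add_add_norm_sub (hf : IsPhaseIsometry f) (x y : X) :
    ‖f x + f y‖ + ‖f x - f y‖ = ‖x + y‖ + ‖x - y‖ := by
  rcases Set.pair_eq_pair_iff.1 (hf x y) with ⟨h₁, h₂⟩ | ⟨h₁, h₂⟩ <;> linarith

theorem norm_map [NormedSpace ℝ X] [NormedSpace ℝ Y] (hf : IsPhaseIsometry f) (x : X) :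
    ‖f x‖ = ‖x‖ := by
  have := hf.norm_add_add_norm_sub x x
  rw [← two_smul ℝ (f x), ← two_smul ℝ x] at this
  simpa [norm_smul] using this

theorem tendsto_abs_apply [NormedSpace ℝ X] [NormedSpace ℝ Y] (hf : IsPhaseIsometry f) {u : X}
    {x' : StrongDual ℝ X}
    (hlim : ∀ y, Tendsto (fun n : ℕ ↦ ‖(n : ℝ) • u + y‖ - n) atTop (𝓝 (x' y)))
    {G : ℕ → StrongDual ℝ Y} (hG : ∀ n, ‖G n‖ ≤ 1) (hGf : ∀ n : ℕ, G n (f ((n : ℝ) • u)) = n)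
    (x : X) : Tendsto (fun n ↦ |G n (f x)|) atTop (𝓝 |x' x|) := by
  set A : ℕ → ℝ := fun n ↦ ‖(n : ℝ) • u + x‖ - n with hA_def
  set B : ℕ → ℝ := fun n ↦ ‖(n : ℝ) • u - x‖ - n with hB_def
  set E : ℕ → ℝ := fun n ↦ ‖f ((n : ℝ) • u) + f x‖ - n - G n (f x) with hE_def
  have hA : Tendsto A atTop (𝓝 (x' x)) := hlim x
  have hB : Tendsto B atTop (𝓝 (-x' x)) := by
    simpa only [map_neg, ← sub_eq_add_neg] using hlim (-x)
  have hE_nonneg : ∀ n, 0 ≤ E n := fun n ↦ by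
    have := (G n).apply_le_norm_of_norm_le_one (hG n) (f ((n : ℝ) • u) + f x)
    rw [map_add, hGf] at this
    simp only [hE_def]
    linarith
  have hE_le : ∀ n, E n ≤ A n + B n := fun n ↦ by
    have := (G n).apply_le_norm_of_norm_le_one (hG n) (f ((n : ℝ) • u) - f x)
    rw [map_sub, hGf] at this
    have := hf.norm_add_add_norm_sub ((n : ℝ) • u) x
    simp only [hE_def, hA_def, hB_def]
    linarith
  have hE : Tendsto E atTop (𝓝 0) :=
    squeeze_zero hE_nonneg hE_le (by simpa using hA.add hB)
  refine Tendsto.of_forall_eq_or_eq (a := fun n ↦ |A n - E n|) (b := fun n ↦ |B n - E n|)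
    (by simpa using (hA.sub hE).abs) (by simpa using (hB.sub hE).abs) fun n ↦ ?_
  rcases hf.norm_add_eq_or ((n : ℝ) • u) x with h | h
  · left
    simp only [hE_def, hA_def, h]
    ring_nf
  · right
    simp only [hE_def, hB_def, h]
    ring_nf

end IsPhaseIsometry

end PhaseIsometry

theorem stmt_6 {X Y : Type*} [NormedAddCommGroup X] [NormedSpace ℝ X]
    [NormedAddCommGroup Y] [NormedSpace ℝ Y] (f : X → Y)
    (hf : ∀ x y : X, ({‖f x + f y‖, ‖f x - f y‖} : Set ℝ) = {‖x + y‖, ‖x - y‖})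
    (u : X) (hu : ‖u‖ = 1) (x' : X →L[ℝ] ℝ) (hx' : ‖x'‖ = 1) (hx'u : x' u = 1)
    (huniq : ∀ ψ : X →L[ℝ] ℝ, ‖ψ‖ = 1 → ψ u = 1 → ψ = x') :
    ∃ φ : Y →L[ℝ] ℝ, ‖φ‖ = 1 ∧ ∀ x : X, x' x = φ (f x) ∨ x' x = -φ (f x) := by
  have hf : IsPhaseIsometry f := hf
  choose G hG_norm hG_apply using fun n : ℕ ↦ exists_dual_vector'' ℝ (f ((n : ℝ) • u))
  have hGf : ∀ n : ℕ, G n (f ((n : ℝ) • u)) = n := fun n ↦ by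
    simp [hG_apply, hf.norm_map, norm_smul, hu]
  obtain ⟨φ, hφ_norm, hφ⟩ := StrongDual.exists_mapClusterPt_apply (l := atTop) hG_norm
  have habs : ∀ x, |φ (f x)| = |x' x| := fun x ↦
    ((hφ (f x)).continuousAt_comp continuous_abs.continuousAt).eq_of_tendsto
      (hf.tendsto_abs_apply (tendsto_norm_smul_add_sub_of_unique hu hx' hx'u huniq) hG_norm hGf x)
  refine ⟨φ, le_antisymm hφ_norm ?_, fun x ↦ abs_eq_abs.1 (habs x).symm⟩
  simpa [habs u, hx'u, hf.norm_map, hu] using φ.le_opNorm (f u)
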